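/- Let A be a ring such that every cotorsion A-module is Gorenstein injective. Then every injective A-module is flat-cotorsion. -/

import Mathlib

open CategoryTheory

universe u

noncomputable section

variable (A : Type u) [Ring A]

/-- `Ext^n_A(M,N)`, as a `ℤ`-module, for left modules over an arbitrary ring `A`. -/
abbrev extAb (n : ℕ) (M N : ModuleCat.{u} A) : ModuleCat.{u} ℤ :=
  ((Ext ℤ (ModuleCat.{u} A) n).obj (Opposite.op M)).obj N

/-- Vanishing of `Ext^n_A(M,N)`. -/
def ExtVanish (n : ℕ) (M N : ModuleCat.{u} A) : Prop :=
  Subsingleton (extAb A n M N)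

/-- The subgroup of `E ⊗_ℤ M` by which one divides to obtain `E ⊗_A M`,
for a right `A`-module `E` and a left `A`-module `M`. -/
def tensorRel (E : Type u) [AddCommGroup E] [Module Aᵐᵒᵖ E]
    (M : Type u) [AddCommGroup M] [Module A M] :
    Submodule ℤ (TensorProduct ℤ E M) :=
  Submodule.span ℤ {x | ∃ (e : E) (a : A) (m : M),
    x = (MulOpposite.op a • e) ⊗ₜ[ℤ] m - e ⊗ₜ[ℤ] (a • m)}

/-- The tensor product `E ⊗_A M` of a right `A`-module `E` and a left `A`-module `M`. -/
abbrev RTensor (E : Type u) [AddCommGroup E] [Module Aᵐᵒᵖ E]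
    (M : Type u) [AddCommGroup M] [Module A M] : Type u :=
  TensorProduct ℤ E M ⧸ tensorRel A E M

/-- Functoriality of `E ⊗_A -` in the left-module variable. -/
def RTensor.map (E : Type u) [AddCommGroup E] [Module Aᵐᵒᵖ E]
    {M N : Type u} [AddCommGroup M] [Module A M] [AddCommGroup N] [Module A N]
    (f : M →ₗ[A] N) : RTensor A E M →ₗ[ℤ] RTensor A E N :=
  Submodule.mapQ _ _ (LinearMap.lTensor E f.toAddMonoidHom.toIntLinearMap) (by
    simp only [tensorRel]
    rw [Submodule.span_le]
    rintro x ⟨e, a, m, rfl⟩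
    refine Submodule.mem_comap.2 ?_
    erw [map_sub, LinearMap.lTensor_tmul, LinearMap.lTensor_tmul]
    refine Submodule.subset_span ⟨e, a, f m, ?_⟩
    simp [LinearMap.map_smul])

/-- Functoriality of `- ⊗_A M` in the right-module variable. -/
def RTensor.mapRight {E E' : Type u} [AddCommGroup E] [Module Aᵐᵒᵖ E]
    [AddCommGroup E'] [Module Aᵐᵒᵖ E']
    (M : Type u) [AddCommGroup M] [Module A M]
    (g : E →ₗ[Aᵐᵒᵖ] E') : RTensor A E M →ₗ[ℤ] RTensor A E' M :=
  Submodule.mapQ _ _ (LinearMap.rTensor M g.toAddMonoidHom.toIntLinearMap) (by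
    simp only [tensorRel]
    rw [Submodule.span_le]
    rintro x ⟨e, a, m, rfl⟩
    refine Submodule.mem_comap.2 ?_
    erw [map_sub, LinearMap.rTensor_tmul, LinearMap.rTensor_tmul]
    refine Submodule.subset_span ⟨g e, a, m, ?_⟩
    simp [LinearMap.map_smul])

/-- A left `A`-module `M` is flat if `- ⊗_A M` preserves injectivity of maps of
right `A`-modules. -/
def IsFlat (M : Type u) [AddCommGroup M] [Module A M] : Prop :=
  ∀ (E E' : Type u) [AddCommGroup E] [Module Aᵐᵒᵖ E] [AddCommGroup E'] [Module Aᵐᵒᵖ E']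
    (g : E →ₗ[Aᵐᵒᵖ] E'), Function.Injective g →
      Function.Injective (RTensor.mapRight A M g)

/-- A right `A`-module `E` is flat if `E ⊗_A -` preserves injectivity of maps of
left `A`-modules. -/
def IsFlatRight (E : Type u) [AddCommGroup E] [Module Aᵐᵒᵖ E] : Prop :=
  ∀ (M N : Type u) [AddCommGroup M] [Module A M] [AddCommGroup N] [Module A N]
    (f : M →ₗ[A] N), Function.Injective f →
      Function.Injective (RTensor.map A E f)

/-- An `A`-module `C` is cotorsion if `Ext^1_A(F,C) = 0` for every flat `F`. -/
def Cotorsion (M : ModuleCat.{u} A) : Prop :=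
  ∀ F : ModuleCat.{u} A, IsFlat A F → ExtVanish A 1 F M

/-- Flat dimension at most `n`. -/
def FlatDimLE : ℕ → ModuleCat.{u} A → Prop
  | 0, M => IsFlat A M
  | n + 1, M => ∃ (F : ModuleCat.{u} A) (π : F ⟶ M), IsFlat A F ∧
      Function.Surjective π ∧
      FlatDimLE n (ModuleCat.of A (LinearMap.ker (π.hom : F →ₗ[A] M)))

/-- Finite flat dimension. -/
def FiniteFlatDim (M : ModuleCat.{u} A) : Prop := ∃ n, FlatDimLE A n M

/-- An `A`-module `M` is strongly cotorsion if `Ext^1_A(L,M) = 0` for every `L` of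
finite flat dimension. -/
def StronglyCotorsion (M : ModuleCat.{u} A) : Prop :=
  ∀ L : ModuleCat.{u} A, FiniteFlatDim A L → ExtVanish A 1 L M

/-- Projective dimension at most `n`. -/
def ProjDimLE : ℕ → ModuleCat.{u} A → Prop
  | 0, M => Module.Projective A M
  | n + 1, M => ∃ (F : ModuleCat.{u} A) (π : F ⟶ M), Module.Projective A F ∧
      Function.Surjective π ∧
      ProjDimLE n (ModuleCat.of A (LinearMap.ker (π.hom : F →ₗ[A] M)))

/-- A `ℤ`-indexed complex of `A`-modules (differential of degree `-1`). -/
structure ModComplex where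
  X : ℤ → ModuleCat.{u} A
  d : ∀ i : ℤ, X (i + 1) ⟶ X i
  dd : ∀ i : ℤ, d (i + 1) ≫ d i = 0

/-- Acyclicity (exactness at every degree) of a complex. -/
def ModComplex.Acyclic (C : ModComplex A) : Prop :=
  ∀ i : ℤ, LinearMap.range ((C.d (i + 1)).hom : C.X (i + 1 + 1) →ₗ[A] C.X (i + 1)) =
    LinearMap.ker ((C.d i).hom : C.X (i + 1) →ₗ[A] C.X i)

/-- `G` is Gorenstein injective: a cycle of a totally acyclic complex of injectives. -/
def GorensteinInjective (G : ModuleCat.{u} A) : Prop :=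
  ∃ C : ModComplex A,
    (∀ i, Module.Injective A (C.X i)) ∧ C.Acyclic ∧
    (∀ E : ModuleCat.{u} A, Module.Injective A E →
      ∀ (i : ℤ) (f : E ⟶ C.X (i + 1)), f ≫ C.d i = 0 →
        ∃ g : E ⟶ C.X (i + 1 + 1), g ≫ C.d (i + 1) = f) ∧
    Nonempty (G ≃ₗ[A] LinearMap.ker ((C.d (-1)).hom : C.X (-1 + 1) →ₗ[A] C.X (-1)))

/-- `G` is Gorenstein projective: a cycle of a totally acyclic complex of projectives. -/
def GorensteinProjective (G : ModuleCat.{u} A) : Prop :=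
  ∃ C : ModComplex A,
    (∀ i, Module.Projective A (C.X i)) ∧ C.Acyclic ∧
    (∀ Q : ModuleCat.{u} A, Module.Projective A Q →
      ∀ (i : ℤ) (f : C.X (i + 1) ⟶ Q), C.d (i + 1) ≫ f = 0 →
        ∃ g : C.X i ⟶ Q, C.d i ≫ g = f) ∧
    Nonempty (G ≃ₗ[A] LinearMap.ker ((C.d (-1)).hom : C.X (-1 + 1) →ₗ[A] C.X (-1)))

/-- `G` is Gorenstein flat: a cycle of an acyclic complex of flats which stays acyclic
after applying `E ⊗_A -` for every injective right `A`-module `E`. -/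
def GorensteinFlat (G : ModuleCat.{u} A) : Prop :=
  ∃ C : ModComplex A,
    (∀ i, IsFlat A (C.X i)) ∧ C.Acyclic ∧
    (∀ (E : Type u) [AddCommGroup E] [Module Aᵐᵒᵖ E], Module.Injective Aᵐᵒᵖ E →
      ∀ i : ℤ,
        LinearMap.range (RTensor.map A E ((C.d (i + 1)).hom : C.X (i + 1 + 1) →ₗ[A] C.X (i + 1))) =
        LinearMap.ker (RTensor.map A E ((C.d i).hom : C.X (i + 1) →ₗ[A] C.X i))) ∧
    Nonempty (G ≃ₗ[A] LinearMap.ker ((C.d (-1)).hom : C.X (-1 + 1) →ₗ[A] C.X (-1)))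

/-- Flat-cotorsion module. -/
def FlatCotorsion (M : ModuleCat.{u} A) : Prop := IsFlat A M ∧ Cotorsion A M

/-- `G` is Gorenstein flat-cotorsion: a cokernel of a totally acyclic complex of
flat-cotorsion modules. -/
def GorensteinFlatCotorsion (G : ModuleCat.{u} A) : Prop :=
  ∃ C : ModComplex A,
    (∀ i, FlatCotorsion A (C.X i)) ∧ C.Acyclic ∧
    (∀ W : ModuleCat.{u} A, FlatCotorsion A W →
      ∀ (i : ℤ) (f : C.X (i + 1) ⟶ W), C.d (i + 1) ≫ f = 0 →
        ∃ g : C.X i ⟶ W, C.d i ≫ g = f) ∧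
    Nonempty (G ≃ₗ[A]
      (C.X 0 ⧸ LinearMap.range ((C.d 0).hom : C.X (0 + 1) →ₗ[A] C.X 0)))

/-- Gorenstein injective dimension at most `n`: `M` has an injective coresolution whose
`n`-th cosyzygy is Gorenstein injective. -/
def GidLE : ℕ → ModuleCat.{u} A → Prop
  | 0, M => GorensteinInjective A M
  | n + 1, M => ∃ (I : ModuleCat.{u} A) (ι : M ⟶ I), Module.Injective A I ∧
      Function.Injective ι ∧
      GidLE n (ModuleCat.of A (I ⧸ LinearMap.range (ι.hom : M →ₗ[A] I)))

/-- Injective dimension at most `n`. -/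
def InjDimLE : ℕ → ModuleCat.{u} A → Prop
  | 0, M => Module.Injective A M
  | n + 1, M => ∃ (I : ModuleCat.{u} A) (ι : M ⟶ I), Module.Injective A I ∧
      Function.Injective ι ∧
      InjDimLE n (ModuleCat.of A (I ⧸ LinearMap.range (ι.hom : M →ₗ[A] I)))

/-- Gorenstein flat dimension at most `n`. -/
def GfdLE : ℕ → ModuleCat.{u} A → Prop
  | 0, M => GorensteinFlat A M
  | n + 1, M => ∃ (F : ModuleCat.{u} A) (π : F ⟶ M), IsFlat A F ∧
      Function.Surjective π ∧
      GfdLE n (ModuleCat.of A (LinearMap.ker (π.hom : F →ₗ[A] M)))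

/-- The Gorenstein injective dimension, as an extended natural number. -/
def gid (M : ModuleCat.{u} A) : ℕ∞ := sInf {n : ℕ∞ | ∃ k : ℕ, n = k ∧ GidLE A k M}

/-- The injective dimension, as an extended natural number. -/
def injDim (M : ModuleCat.{u} A) : ℕ∞ := sInf {n : ℕ∞ | ∃ k : ℕ, n = k ∧ InjDimLE A k M}

/-- The projective dimension, as an extended natural number. -/
def projDim (M : ModuleCat.{u} A) : ℕ∞ := sInf {n : ℕ∞ | ∃ k : ℕ, n = k ∧ ProjDimLE A k M}

/-- The finitistic projective dimension of `A`. -/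
def FPD : ℕ∞ := sSup {d : ℕ∞ | ∃ M : ModuleCat.{u} A, d = projDim A M ∧ d ≠ ⊤}

/-- `D` is an `n`-th cosyzygy of `N` with respect to an injective coresolution:
there is an exact sequence `0 → N → E_0 → ⋯ → E_{n-1} → D → 0` with the `E_i` injective. -/
def CosyzygyOf : ℕ → ModuleCat.{u} A → ModuleCat.{u} A → Prop
  | 0, N, D => Nonempty (N ≃ₗ[A] D)
  | n + 1, N, D => ∃ (E : ModuleCat.{u} A) (ι : N ⟶ E), Module.Injective A E ∧
      Function.Injective ι ∧
      CosyzygyOf n (ModuleCat.of A (E ⧸ LinearMap.range (ι.hom : N →ₗ[A] E))) D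

/-- `M` is an `n`-th syzygy of `N` with respect to a resolution by flat modules:
there is an exact sequence `0 → M → F_{n-1} → ⋯ → F_0 → N → 0` with the `F_i` flat. -/
def SyzygyOf : ℕ → ModuleCat.{u} A → ModuleCat.{u} A → Prop
  | 0, M, N => Nonempty (M ≃ₗ[A] N)
  | n + 1, M, N => ∃ (F : ModuleCat.{u} A) (ι : M ⟶ F), IsFlat A F ∧
      Function.Injective ι ∧
      SyzygyOf n (ModuleCat.of A (F ⧸ LinearMap.range (ι.hom : M →ₗ[A] F))) N

end

/-!
Flatness of an injective `I` is tested with characters (Lambek): `E ⊗ I → E' ⊗ I` is injective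
for every injection `E → E'` of right modules as soon as every map `I → E⋆` lifts along the
restriction `E'⋆ → E⋆`, a surjection with kernel `(E' / E)⋆`. Character modules are cotorsion,
since `Ext¹(F, N⋆) ≅ Tor₁(N, F)⋆` vanishes for flat `F`; by hypothesis `(E' / E)⋆` is then
Gorenstein injective, and Gorenstein injectives are right `Ext¹`-orthogonal to injectives, which
produces the lift. Injective modules are trivially cotorsion.
-/

section Lifting

variable {R : Type*} [Ring R] {M N P Q : Type*} [AddCommGroup M] [Module R M] [AddCommGroup N]
  [Module R N] [AddCommGroup P] [Module R P] [AddCommGroup Q] [Module R Q]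

lemma Function.Exact.exists_comp_eq_of_surjective {f : M →ₗ[R] N} {g : N →ₗ[R] P}
    (h : Function.Exact f g) (hg : Function.Surjective g) {u : N →ₗ[R] Q} (hu : u ∘ₗ f = 0) :
    ∃ w : P →ₗ[R] Q, w ∘ₗ g = u :=
  ⟨(LinearMap.range f).liftQ u (LinearMap.range_le_ker_iff.2 hu) ∘ₗ
      (h.linearEquivOfSurjective hg).symm.toLinearMap, by ext; simp⟩

lemma LinearMap.exists_comp_eq_of_range_le {m : M →ₗ[R] N} (hm : Function.Injective m)
    {f : P →ₗ[R] N} (h : LinearMap.range f ≤ LinearMap.range m) : ∃ ψ : P →ₗ[R] M, m ∘ₗ ψ = f :=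
  ⟨(LinearEquiv.ofInjective m hm).symm.toLinearMap ∘ₗ f.codRestrict _ fun x => h ⟨x, rfl⟩, by
    ext x
    simp⟩

end Lifting

namespace RTensor

open MulOpposite

variable {A : Type u} [Ring A]
  {E E' E'' : Type u} [AddCommGroup E] [Module Aᵐᵒᵖ E] [AddCommGroup E'] [Module Aᵐᵒᵖ E']
  [AddCommGroup E''] [Module Aᵐᵒᵖ E'']
  {M N L : Type u} [AddCommGroup M] [Module A M] [AddCommGroup N] [Module A N]
  [AddCommGroup L] [Module A L]

def tmul (A : Type u) [Ring A] {E M : Type u} [AddCommGroup E] [Module Aᵐᵒᵖ E]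
    [AddCommGroup M] [Module A M] (e : E) (m : M) : RTensor A E M :=
  Submodule.Quotient.mk (e ⊗ₜ[ℤ] m)

lemma add_tmul (e e' : E) (m : M) : tmul A (e + e') m = tmul A e m + tmul A e' m := by
  simp only [tmul, TensorProduct.add_tmul, Submodule.Quotient.mk_add]

lemma tmul_add (e : E) (m m' : M) : tmul A e (m + m') = tmul A e m + tmul A e m' := by
  simp only [tmul, TensorProduct.tmul_add, Submodule.Quotient.mk_add]

lemma sub_tmul (e e' : E) (m : M) : tmul A (e - e') m = tmul A e m - tmul A e' m := by
  simp only [tmul, TensorProduct.sub_tmul, Submodule.Quotient.mk_sub]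

lemma tmul_sub (e : E) (m m' : M) : tmul A e (m - m') = tmul A e m - tmul A e m' := by
  simp only [tmul, TensorProduct.tmul_sub, Submodule.Quotient.mk_sub]

@[simp] lemma zero_tmul (m : M) : tmul A (0 : E) m = 0 := by
  simp [tmul]

@[simp] lemma tmul_zero (e : E) : tmul A e (0 : M) = 0 := by
  simp [tmul]

lemma op_smul_tmul (e : E) (a : A) (m : M) : tmul A (op a • e) m = tmul A e (a • m) := by
  rw [tmul, tmul, ← sub_eq_zero, ← Submodule.Quotient.mk_sub, Submodule.Quotient.mk_eq_zero]
  exact Submodule.subset_span ⟨e, a, m, rfl⟩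

@[elab_as_elim]
lemma induction_on {P : RTensor A E M → Prop} (x : RTensor A E M) (zero : P 0)
    (tmul : ∀ e m, P (tmul A e m)) (add : ∀ x y, P x → P y → P (x + y)) : P x := by
  obtain ⟨y, rfl⟩ := Submodule.Quotient.mk_surjective _ x
  induction y using TensorProduct.induction_on with
  | zero => exact zero
  | tmul e m => exact tmul e m
  | add a b ha hb => exact add _ _ ha hb

@[ext]
lemma hom_ext {D : Type*} [AddCommGroup D] {φ ψ : RTensor A E M →ₗ[ℤ] D}
    (h : ∀ e m, φ (tmul A e m) = ψ (tmul A e m)) : φ = ψ :=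
  Submodule.linearMap_qext _ (TensorProduct.ext' h)

def lift {D : Type*} [AddCommGroup D] (f : E →+ M →+ D)
    (hf : ∀ (a : A) (e : E) (m : M), f (op a • e) m = f e (a • m)) :
    RTensor A E M →ₗ[ℤ] D :=
  Submodule.liftQ _ (TensorProduct.liftAddHom f fun z e m => by simp).toIntLinearMap <| by
    rw [tensorRel, Submodule.span_le]
    rintro x ⟨e, a, m, rfl⟩
    simp [hf]

@[simp] lemma lift_tmul {D : Type*} [AddCommGroup D] (f : E →+ M →+ D)
    (hf : ∀ (a : A) (e : E) (m : M), f (op a • e) m = f e (a • m)) (e : E) (m : M) :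
    lift f hf (tmul A e m) = f e m :=
  TensorProduct.liftAddHom_tmul (R := ℤ) f (fun _ _ _ => by simp) e m

@[simp] lemma map_tmul (f : M →ₗ[A] N) (e : E) (m : M) :
    RTensor.map A E f (tmul A e m) = tmul A e (f m) :=
  rfl

@[simp] lemma mapRight_tmul (g : E →ₗ[Aᵐᵒᵖ] E') (e : E) (m : M) :
    RTensor.mapRight A M g (tmul A e m) = tmul A (g e) m :=
  rfl

lemma map_comp (f : M →ₗ[A] N) (f' : N →ₗ[A] L) :
    RTensor.map A E (f' ∘ₗ f) = RTensor.map A E f' ∘ₗ RTensor.map A E f :=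
  hom_ext fun _ _ => rfl

lemma mapRight_comp (g : E →ₗ[Aᵐᵒᵖ] E') (g' : E' →ₗ[Aᵐᵒᵖ] E'') :
    RTensor.mapRight A M (g' ∘ₗ g) = RTensor.mapRight A M g' ∘ₗ RTensor.mapRight A M g :=
  hom_ext fun _ _ => rfl

lemma map_comp_mapRight (f : M →ₗ[A] N) (g : E →ₗ[Aᵐᵒᵖ] E') :
    RTensor.map A E' f ∘ₗ RTensor.mapRight A M g = RTensor.mapRight A N g ∘ₗ RTensor.map A E f :=
  hom_ext fun _ _ => rfl

@[simp] lemma map_zero : RTensor.map A E (0 : M →ₗ[A] N) = 0 :=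
  hom_ext fun _ _ => by simp

@[simp] lemma mapRight_zero : RTensor.mapRight A M (0 : E →ₗ[Aᵐᵒᵖ] E') = 0 :=
  hom_ext fun _ _ => by simp

lemma mapRight_surjective {g : E →ₗ[Aᵐᵒᵖ] E'} (hg : Function.Surjective g) :
    Function.Surjective (RTensor.mapRight A M g) := by
  intro x
  induction x using induction_on with
  | zero => exact ⟨0, LinearMap.map_zero _⟩
  | tmul e' m => obtain ⟨e, rfl⟩ := hg e'; exact ⟨tmul A e m, rfl⟩
  | add x y hx hy =>
    obtain ⟨x', rfl⟩ := hx
    obtain ⟨y', rfl⟩ := hy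
    exact ⟨x' + y', LinearMap.map_add _ _ _⟩

/-- Modulo the image of `E ⊗_A f₁`, the map `E ⊗_A f₂` is inverted by `e ⊗ l ↦ e ⊗ s l` for any
set-theoretic section `s` of `f₂`: exactness makes this independent of `s`, hence balanced. -/
lemma exact_map {f₁ : M →ₗ[A] N} {f₂ : N →ₗ[A] L} (hf : Function.Exact f₁ f₂)
    (hf₂ : Function.Surjective f₂) :
    Function.Exact (RTensor.map A E f₁) (RTensor.map A E f₂) := by
  refine Function.Exact.of_comp_of_mem_range ?_ fun y hy => ?_
  · rw [← LinearMap.coe_comp, ← map_comp, hf.linearMap_comp_eq_zero, map_zero]; rfl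
  let π := (LinearMap.range (RTensor.map A E f₁)).mkQ
  have wd : ∀ (e : E) (n n' : N), f₂ n = f₂ n' → π (tmul A e n) = π (tmul A e n') := by
    intro e n n' h
    obtain ⟨m, hm⟩ := (hf (n - n')).1 (by rw [_root_.map_sub, h, sub_self])
    rw [← sub_eq_zero, ← _root_.map_sub, ← tmul_sub, ← hm, Submodule.mkQ_apply,
      Submodule.Quotient.mk_eq_zero]
    exact ⟨tmul A e m, rfl⟩
  let s := Function.surjInv hf₂
  have hs : ∀ l, f₂ (s l) = l := Function.surjInv_eq hf₂
  let φ : E →+ L →+ _ := AddMonoidHom.mk'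
    (fun e => AddMonoidHom.mk' (fun l => π (tmul A e (s l))) fun l l' => by
      rw [wd e _ (s l + s l') (by simp only [_root_.map_add, hs]), tmul_add, _root_.map_add])
    fun e e' => by ext l; simp [add_tmul]
  have hφ : ∀ (a : A) (e : E) (l : L), φ (op a • e) l = φ e (a • l) := fun a e l =>
    (congrArg π (op_smul_tmul e a _)).trans (wd e _ _ (by rw [map_smul, hs, hs]))
  have key : lift φ hφ ∘ₗ RTensor.map A E f₂ = π :=
    hom_ext fun e n => wd e _ _ (hs _)
  have : π y = 0 := by rw [← key, LinearMap.comp_apply, hy, _root_.map_zero]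
  rwa [Submodule.mkQ_apply, Submodule.Quotient.mk_eq_zero] at this

lemma exact_mapRight {g₁ : E →ₗ[Aᵐᵒᵖ] E'} {g₂ : E' →ₗ[Aᵐᵒᵖ] E''} (hg : Function.Exact g₁ g₂)
    (hg₂ : Function.Surjective g₂) :
    Function.Exact (RTensor.mapRight A M g₁) (RTensor.mapRight A M g₂) := by
  refine Function.Exact.of_comp_of_mem_range ?_ fun y hy => ?_
  · rw [← LinearMap.coe_comp, ← mapRight_comp, hg.linearMap_comp_eq_zero, mapRight_zero]; rfl
  let π := (LinearMap.range (RTensor.mapRight A M g₁)).mkQ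
  have wd : ∀ (e e' : E') (m : M), g₂ e = g₂ e' → π (tmul A e m) = π (tmul A e' m) := by
    intro e e' m h
    obtain ⟨d, hd⟩ := (hg (e - e')).1 (by rw [_root_.map_sub, h, sub_self])
    rw [← sub_eq_zero, ← _root_.map_sub, ← sub_tmul, ← hd, Submodule.mkQ_apply,
      Submodule.Quotient.mk_eq_zero]
    exact ⟨tmul A d m, rfl⟩
  let s := Function.surjInv hg₂
  have hs : ∀ l, g₂ (s l) = l := Function.surjInv_eq hg₂
  let φ : E'' →+ M →+ _ := AddMonoidHom.mk'
    (fun l => AddMonoidHom.mk' (fun m => π (tmul A (s l) m)) fun m m' => by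
      rw [tmul_add, _root_.map_add])
    fun l l' => by
      ext m
      simp only [AddMonoidHom.mk'_apply, AddMonoidHom.add_apply]
      rw [wd _ (s l + s l') m (by simp only [_root_.map_add, hs]), add_tmul, _root_.map_add]
  have hφ : ∀ (a : A) (l : E'') (m : M), φ (op a • l) m = φ l (a • m) := fun a l m =>
    (wd _ _ m (by rw [map_smul, hs, hs])).trans (congrArg π (op_smul_tmul (s l) a m))
  have key : lift φ hφ ∘ₗ RTensor.mapRight A M g₂ = π :=
    hom_ext fun e m => wd _ _ m (hs _)
  have : π y = 0 := by rw [← key, LinearMap.comp_apply, hy, _root_.map_zero]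
  rwa [Submodule.mkQ_apply, Submodule.Quotient.mk_eq_zero] at this

section Free

variable (α : Type u)

noncomputable def toFinsupp : RTensor A (α →₀ Aᵐᵒᵖ) M →ₗ[ℤ] (α →₀ M) :=
  lift
    (AddMonoidHom.mk'
      (fun l => AddMonoidHom.mk' (fun m => l.mapRange (fun c => c.unop • m) (by simp))
        fun m m' => by ext; simp [smul_add])
      fun l l' => by ext; simp [add_smul])
    fun a l m => by ext; simp [mul_smul]

@[simp] lemma toFinsupp_tmul (l : α →₀ Aᵐᵒᵖ) (m : M) :
    toFinsupp α (tmul A l m) = l.mapRange (fun c => c.unop • m) (by simp) :=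
  lift_tmul _ _ _ _

noncomputable def ofFinsupp : (α →₀ M) →+ RTensor A (α →₀ Aᵐᵒᵖ) M :=
  Finsupp.liftAddHom fun a =>
    AddMonoidHom.mk' (tmul A (Finsupp.single a (1 : Aᵐᵒᵖ))) (tmul_add _)

lemma ofFinsupp_toFinsupp (t : RTensor A (α →₀ Aᵐᵒᵖ) M) :
    ofFinsupp α (toFinsupp α t) = t := by
  induction t using induction_on with
  | zero => simp
  | add x y hx hy => rw [_root_.map_add, _root_.map_add, hx, hy]
  | tmul l m =>
    induction l using Finsupp.induction_linear with
    | zero => simp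
    | add l l' hl hl' => simp only [add_tmul, _root_.map_add, hl, hl']
    | single a c =>
      simp [ofFinsupp, ← op_smul_tmul]

lemma map_injective_of_free {f : M →ₗ[A] N} (hf : Function.Injective f) :
    Function.Injective (RTensor.map A (α →₀ Aᵐᵒᵖ) f) := by
  have hnat : ∀ t, toFinsupp α (RTensor.map A _ f t) = (toFinsupp α t).mapRange f f.map_zero := by
    intro t
    induction t using induction_on with
    | zero => simp
    | add x y hx hy => simp only [_root_.map_add, hx, hy, Finsupp.mapRange_add f.map_add]
    | tmul l m => ext; simp
  refine fun t t' h => (Function.LeftInverse.injective (ofFinsupp_toFinsupp α)) ?_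
  exact Finsupp.mapRange_injective f f.map_zero hf (by rw [← hnat, ← hnat, h])

end Free

/-- Diagram chase against a free presentation `0 → N → P → M → 0`: if `x ∈ M ⊗ K` dies in
`M ⊗ X`, lift it to `y ∈ P ⊗ K`; the image of `y` in `P ⊗ X` comes from some `z ∈ N ⊗ X`, whose
image in `N ⊗ F` dies in `P ⊗ F`, hence vanishes as `F` is flat, so `z` comes from `N ⊗ K`. Since
`P ⊗ K → P ⊗ X` is injective (`P` is free), `y` comes from `N ⊗ K` as well, and `x = 0`. -/
lemma map_injective_of_isFlat {K X F : Type u} [AddCommGroup K] [Module A K] [AddCommGroup X]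
    [Module A X] [AddCommGroup F] [Module A F] (hF : IsFlat A F) {i : K →ₗ[A] X}
    {q : X →ₗ[A] F} (hi : Function.Injective i) (hiq : Function.Exact i q)
    (hq : Function.Surjective q) (M : Type u) [AddCommGroup M] [Module Aᵐᵒᵖ M] :
    Function.Injective (RTensor.map A M i) := by
  rw [injective_iff_map_eq_zero]
  intro x hx
  let pr : (M →₀ Aᵐᵒᵖ) →ₗ[Aᵐᵒᵖ] M := Finsupp.linearCombination Aᵐᵒᵖ id
  have hpr : Function.Surjective pr := fun m => ⟨Finsupp.single m 1, by simp [pr]⟩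
  let ι := (LinearMap.ker pr).subtype
  have hιpr : Function.Exact ι pr := LinearMap.exact_subtype_ker_map pr
  obtain ⟨y, rfl⟩ := mapRight_surjective (M := K) hpr x
  have h₁ : RTensor.mapRight A X pr (RTensor.map A _ i y) = 0 := by
    rw [← LinearMap.comp_apply, ← map_comp_mapRight, LinearMap.comp_apply, hx]
  obtain ⟨z, hz⟩ := (exact_mapRight (E := LinearMap.ker pr) (M := X) hιpr hpr _).1 h₁
  have h₂ : RTensor.mapRight A F ι (RTensor.map A _ q z) = 0 := by
    rw [← LinearMap.comp_apply, ← map_comp_mapRight, LinearMap.comp_apply, hz,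
      ← LinearMap.comp_apply, ← map_comp, hiq.linearMap_comp_eq_zero, map_zero,
      LinearMap.zero_apply]
  have h₃ : RTensor.map A (LinearMap.ker pr) q z = 0 := by
    apply hF (LinearMap.ker pr) _ ι (LinearMap.ker pr).injective_subtype
    rw [h₂, _root_.map_zero]
  obtain ⟨w, rfl⟩ := (exact_map hiq hq _).1 h₃
  have h₄ : RTensor.mapRight A K ι w = y := by
    refine map_injective_of_free M hi ?_
    rw [← hz, ← LinearMap.comp_apply, map_comp_mapRight, LinearMap.comp_apply]
  rw [← h₄, ← LinearMap.comp_apply, ← mapRight_comp, hιpr.linearMap_comp_eq_zero, mapRight_zero,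
    LinearMap.zero_apply]

end RTensor

namespace CharacterModule

open MulOpposite

variable {A : Type u} [Ring A]

section Module

variable {E : Type u} [AddCommGroup E] [Module Aᵐᵒᵖ E]

instance instSMulOp : SMul A (CharacterModule E) :=
  ⟨fun a χ => χ.comp (DistribSMul.toAddMonoidHom E (op a))⟩

@[simp] lemma smul_apply_op (a : A) (χ : CharacterModule E) (e : E) :
    (a • χ) e = χ (op a • e) :=
  rfl

instance instModuleOp : Module A (CharacterModule E) where
  one_smul χ := by ext; simp
  mul_smul a b χ := by ext; simp [mul_smul]
  smul_zero a := rfl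
  smul_add a χ ψ := rfl
  add_smul a b χ := by
    ext e
    show χ (op (a + b) • e) = χ (op a • e) + χ (op b • e)
    rw [MulOpposite.op_add, add_smul, map_add]
  zero_smul χ := by
    ext e
    show χ (op (0 : A) • e) = 0
    rw [MulOpposite.op_zero, zero_smul, map_zero]

end Module

variable {E E' : Type u} [AddCommGroup E] [Module Aᵐᵒᵖ E] [AddCommGroup E'] [Module Aᵐᵒᵖ E']

def dualOp (g : E →ₗ[Aᵐᵒᵖ] E') : CharacterModule E' →ₗ[A] CharacterModule E where
  toFun χ := χ.comp g.toAddMonoidHom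
  map_add' _ _ := rfl
  map_smul' a χ := by ext e; exact congrArg χ (g.map_smul (op a) e).symm

@[simp] lemma dualOp_apply (g : E →ₗ[Aᵐᵒᵖ] E') (χ : CharacterModule E') (e : E) :
    dualOp g χ e = χ (g e) :=
  rfl

lemma dualOp_surjective_of_injective {g : E →ₗ[Aᵐᵒᵖ] E'} (hg : Function.Injective g) :
    Function.Surjective (dualOp (A := A) g) :=
  dual_surjective_of_injective g.toAddMonoidHom.toIntLinearMap hg

lemma dualOp_injective_of_surjective {g : E →ₗ[Aᵐᵒᵖ] E'} (hg : Function.Surjective g) :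
    Function.Injective (dualOp (A := A) g) :=
  dual_injective_of_surjective g.toAddMonoidHom.toIntLinearMap hg

lemma exact_dualOp_mkQ_range (g : E →ₗ[Aᵐᵒᵖ] E') :
    Function.Exact (dualOp (A := A) (LinearMap.range g).mkQ) (dualOp g) := by
  refine Function.Exact.of_comp_of_mem_range (funext fun χ => ?_) fun χ hχ => ?_
  · ext e
    exact (congrArg χ ((Submodule.Quotient.mk_eq_zero _).2 (LinearMap.mem_range_self g e))).trans
      (map_zero χ)
  · refine ⟨QuotientAddGroup.lift _ χ ?_, rfl⟩
    rintro _ ⟨e, rfl⟩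
    exact DFunLike.congr_fun hχ e

end CharacterModule

namespace RTensor

variable {A : Type u} [Ring A] {E : Type u} [AddCommGroup E] [Module Aᵐᵒᵖ E]
  {I : Type u} [AddCommGroup I] [Module A I]

def charCurry (χ : CharacterModule (RTensor A E I)) : I →ₗ[A] CharacterModule E where
  toFun m := AddMonoidHom.mk' (fun e => χ (tmul A e m)) fun e e' => by
    rw [add_tmul, map_add]
  map_add' m m' := by ext e; exact (congrArg χ (tmul_add e m m')).trans (map_add χ _ _)
  map_smul' a m := by ext e; exact congrArg χ (op_smul_tmul e a m).symm

@[simp] lemma charCurry_apply (χ : CharacterModule (RTensor A E I)) (m : I) (e : E) :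
    charCurry χ m e = χ (tmul A e m) :=
  rfl

def charUncurry (ψ : I →ₗ[A] CharacterModule E) : CharacterModule (RTensor A E I) :=
  (lift (AddMonoidHom.mk'
      (fun e => AddMonoidHom.mk' (fun m => ψ m e) fun m m' => by rw [map_add]; rfl)
      fun e e' => by ext m; exact map_add (ψ m) e e')
    fun a e m => by simp).toAddMonoidHom

@[simp] lemma charUncurry_tmul (ψ : I →ₗ[A] CharacterModule E) (e : E) (m : I) :
    charUncurry ψ (tmul A e m) = ψ m e := by
  erw [charUncurry, LinearMap.toAddMonoidHom_coe, lift_tmul]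

end RTensor

open RTensor CharacterModule in
/-- One half of Lambek's criterion: a nonzero element of the kernel of `E ⊗ I → E' ⊗ I` would be
detected by a character of `E ⊗ I`, that is, by a map `I → E⋆`. -/
lemma isFlat_of_exists_lift_dualOp {A : Type u} [Ring A] {I : Type u} [AddCommGroup I]
    [Module A I]
    (H : ∀ (E E' : Type u) [AddCommGroup E] [Module Aᵐᵒᵖ E] [AddCommGroup E'] [Module Aᵐᵒᵖ E']
      (g : E →ₗ[Aᵐᵒᵖ] E'), Function.Injective g →
      ∀ φ : I →ₗ[A] CharacterModule E, ∃ ψ : I →ₗ[A] CharacterModule E', dualOp g ∘ₗ ψ = φ) :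
    IsFlat A I := by
  intro E E' _ _ _ _ g hg
  rw [injective_iff_map_eq_zero]
  intro x hx
  refine eq_zero_of_character_apply fun χ => ?_
  obtain ⟨ψ, hψ⟩ := H E E' g hg (charCurry χ)
  have hχ : (charUncurry ψ).toIntLinearMap ∘ₗ RTensor.mapRight A I g = χ.toIntLinearMap :=
    hom_ext fun e m => by
      show charUncurry ψ (tmul A (g e) m) = χ (tmul A e m)
      rw [charUncurry_tmul, ← dualOp_apply, ← LinearMap.comp_apply, hψ, charCurry_apply]
  have := LinearMap.congr_fun hχ x
  rw [LinearMap.comp_apply, hx, _root_.map_zero] at this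
  exact this.symm

section Cotorsion

variable {A : Type u} [Ring A]

/-- It suffices to extend along `0 → P₁ / im P₂ → P₀ → F → 0`, the first step of a projective
resolution of `F`. -/
lemma extVanish_one_of_forall_extend {F Y : ModuleCat.{u} A}
    (H : ∀ (K X : Type u) [AddCommGroup K] [Module A K] [AddCommGroup X] [Module A X]
      (i : K →ₗ[A] X) (q : X →ₗ[A] F), Function.Injective i → Function.Exact i q →
      Function.Surjective q → ∀ φ : K →ₗ[A] Y, ∃ ψ : X →ₗ[A] Y, ψ ∘ₗ i = φ) :
    ExtVanish A 1 F Y := by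
  obtain ⟨P⟩ := (inferInstance : HasProjectiveResolution F).out
  have hexact : (P.complex.linearYonedaObj ℤ Y).ExactAt 1 := by
    rw [HomologicalComplex.exactAt_iff' _ 0 1 2 (by simp) (by simp),
      ShortComplex.moduleCat_exact_iff]
    intro (f : P.complex.X 1 ⟶ Y) (hf : P.complex.d 2 1 ≫ f = 0)
    let d₂ := (P.complex.d 2 1).hom
    let d₁ := (P.complex.d 1 0).hom
    let q := (P.π.f 0 ≫ (HomologicalComplex.singleObjXSelf (ComplexShape.down ℕ) 0 F).hom).hom
    have hd : LinearMap.range d₂ = LinearMap.ker d₁ := (P.exact_succ 0).moduleCat_range_eq_ker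
    have hq : LinearMap.range d₁ = LinearMap.ker q := by
      rw [P.exact₀.moduleCat_range_eq_ker]
      exact (LinearMap.ker_comp_of_ker_eq_bot _
        (LinearMap.ker_eq_bot.2 ((ModuleCat.mono_iff_injective _).1 inferInstance))).symm
    let i := (LinearMap.range d₂).liftQ d₁ hd.le
    let φ := (LinearMap.range d₂).liftQ f.hom <| by
      rintro _ ⟨x, rfl⟩
      exact congrArg (fun g => g.hom x) hf
    obtain ⟨ψ, hψ⟩ := H _ _ i q
      (LinearMap.ker_eq_bot.1 (Submodule.ker_liftQ_eq_bot' _ _ hd))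
      (LinearMap.exact_iff.2 (hq.symm.trans (Submodule.range_liftQ _ _ _).symm))
      ((ModuleCat.epi_iff_surjective _).1 inferInstance) φ
    refine ⟨ModuleCat.ofHom ψ, ModuleCat.hom_ext (LinearMap.ext fun x => ?_)⟩
    exact LinearMap.congr_fun hψ (Submodule.Quotient.mk x)
  exact ModuleCat.subsingleton_of_isZero
    (((HomologicalComplex.exactAt_iff_isZero_homology _ _).1 hexact).of_iso (P.isoExt 1 Y))

lemma cotorsion_of_injective (I : ModuleCat.{u} A) (hI : Module.Injective A I) : Cotorsion A I :=
  fun _ _ => extVanish_one_of_forall_extend fun _ _ _ _ _ _ i _ hi _ _ φ => by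
    obtain ⟨ψ, hψ⟩ := hI.out i hi φ
    exact ⟨ψ, LinearMap.ext hψ⟩

open RTensor CharacterModule in
/-- A map `K → M⋆` is a character of `M ⊗ K`; it extends along the injection `M ⊗ K → M ⊗ X`
provided by the flatness of `X / K`. -/
lemma cotorsion_characterModule (M : Type u) [AddCommGroup M] [Module Aᵐᵒᵖ M] :
    Cotorsion A (ModuleCat.of A (CharacterModule M)) := by
  intro F hF
  refine extVanish_one_of_forall_extend fun K X _ _ _ _ i q hi hiq hq φ => ?_
  obtain ⟨χ, hχ⟩ :=
    dual_surjective_of_injective _ (map_injective_of_isFlat hF hi hiq hq M) (charUncurry φ)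
  refine ⟨charCurry χ, LinearMap.ext fun k => ?_⟩
  ext e
  calc charCurry χ (i k) e = dual (RTensor.map A M i) χ (tmul A e k) := rfl
    _ = φ k e := by rw [hχ, charUncurry_tmul]

end Cotorsion

/-- `Ext¹(I, G) = 0` for `G` Gorenstein injective and `I` injective, as a lifting property.
Embed `G = ker (d : C₀ → C₋₁)` in a totally acyclic complex and extend to `u : Y → C₀`; then
`d ∘ u` descends to `w : Z → C₋₁`, and total acyclicity writes `w ∘ φ = d ∘ g`. The map
`(u, p) : Y → C₀ × Z` is injective and its image contains that of `(g, φ)`, giving the lift. -/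
lemma GorensteinInjective.exists_lift {A : Type u} [Ring A] {G : ModuleCat.{u} A}
    (hG : GorensteinInjective A G) {I Y Z : Type u} [AddCommGroup I] [Module A I]
    [AddCommGroup Y] [Module A Y] [AddCommGroup Z] [Module A Z] (hI : Module.Injective A I)
    {i : G →ₗ[A] Y} {p : Y →ₗ[A] Z} (hi : Function.Injective i) (hip : Function.Exact i p)
    (hp : Function.Surjective p) (φ : I →ₗ[A] Z) : ∃ ψ : I →ₗ[A] Y, p ∘ₗ ψ = φ := by
  obtain ⟨C, hinj, -, hlift, ⟨e⟩⟩ := hG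
  let d := (C.d (-1)).hom
  let j : G →ₗ[A] C.X (-1 + 1) := (LinearMap.ker d).subtype ∘ₗ e.toLinearMap
  have hj : ∀ k, d (j k) = 0 := fun k => (e k).2
  have hj_ker : ∀ c, d c = 0 → ∃ k, j k = c := fun c hc => ⟨e.symm ⟨c, hc⟩, by simp [j]⟩
  obtain ⟨u, hu⟩ := (hinj (-1 + 1)).out i hi j
  obtain ⟨w, hw⟩ := hip.exists_comp_eq_of_surjective hp (u := d ∘ₗ u)
    (LinearMap.ext fun k => by simp [hu, hj])
  have hdw : ∀ z, (C.d (-2)).hom (w z) = 0 := fun z => by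
    obtain ⟨y, rfl⟩ := hp z
    rw [← LinearMap.comp_apply w p, hw]
    exact LinearMap.congr_fun (congrArg ModuleCat.Hom.hom (C.dd (-2))) (u y)
  obtain ⟨g, hg⟩ := hlift (ModuleCat.of A I) hI (-2)
    (ModuleCat.ofHom (Y := C.X (-2 + 1)) (w ∘ₗ φ))
    (ModuleCat.hom_ext (LinearMap.ext fun t => hdw (φ t)))
  let g₀ : I →ₗ[A] C.X (-1 + 1) := g.hom
  have hg₀ : ∀ t, d (g₀ t) = w (φ t) := fun t =>
    LinearMap.congr_fun (congrArg ModuleCat.Hom.hom hg) t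
  have hm : Function.Injective (u.prod p) := by
    rw [injective_iff_map_eq_zero]
    intro y hy
    obtain ⟨k, rfl⟩ := (hip y).1 (congrArg Prod.snd hy)
    have hk : j k = 0 := (hu k).symm.trans (congrArg Prod.fst hy)
    rw [(injective_iff_map_eq_zero j).1 (Subtype.val_injective.comp e.injective) k hk, map_zero]
  have hrange : LinearMap.range (g₀.prod φ) ≤ LinearMap.range (u.prod p) := by
    rintro _ ⟨t, rfl⟩
    obtain ⟨y, hy⟩ := hp (φ t)
    obtain ⟨k, hk⟩ := hj_ker (u y - g₀ t) <| by
      rw [map_sub, hg₀, ← hy, ← LinearMap.comp_apply w p, hw, LinearMap.comp_apply, sub_self]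
    refine ⟨y - i k, Prod.ext ?_ ?_⟩
    · simp [hu, hk]
    · simp [hy, hip.apply_apply_eq_zero]
  obtain ⟨ψ, hψ⟩ := LinearMap.exists_comp_eq_of_range_le hm hrange
  exact ⟨ψ, LinearMap.ext fun t => congrArg Prod.snd (LinearMap.congr_fun hψ t)⟩

/-- if every cotorsion module is Gorenstein injective, then every
injective module is flat-cotorsion. -/
theorem stmt7 (A : Type u) [Ring A]
    (h : ∀ M : ModuleCat.{u} A, Cotorsion A M → GorensteinInjective A M) :
    ∀ I : ModuleCat.{u} A, Module.Injective A I → FlatCotorsion A I := by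
  intro I hI
  refine ⟨isFlat_of_exists_lift_dualOp fun E E' _ _ _ _ g hg φ => ?_, cotorsion_of_injective I hI⟩
  have hG := h _ (cotorsion_characterModule (A := A) (E' ⧸ LinearMap.range g))
  exact hG.exists_lift hI
    (CharacterModule.dualOp_injective_of_surjective (Submodule.mkQ_surjective _))
    (CharacterModule.exact_dualOp_mkQ_range g) (CharacterModule.dualOp_surjective_of_injective hg) φ
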